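/- arXiv:2407.19254 — 2 statements merged into one kernel-verified Lean document; each statement's English description precedes it below -/
import Mathlib

section
/- Let U ⊆ ℂ be an open convex set and let φ be a smooth function on U. Suppose that for every λ ∈ ℂ with |λ| < 1, the function s ↦ φ(s + λ² s̄) is subharmonic on V_λ := {s ∈ ℂ : s + λ² s̄ ∈ U}. Then φ is convex on U. -/
open Complex

/-- Wirtinger derivative `∂f/∂t = (∂f/∂x - i ∂f/∂y)/2` of a function `f : ℂ → ℂ`. -/
noncomputable def wd (f : ℂ → ℂ) (t : ℂ) : ℂ :=
  (fderiv ℝ f t 1 - Complex.I * fderiv ℝ f t Complex.I) / 2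

/-- Conjugate Wirtinger derivative `∂f/∂t̄ = (∂f/∂x + i ∂f/∂y)/2`. -/
noncomputable def wdBar (f : ℂ → ℂ) (t : ℂ) : ℂ :=
  (fderiv ℝ f t 1 + Complex.I * fderiv ℝ f t Complex.I) / 2

set_option maxHeartbeats 1000000

lemma clm_decomp {W : Type*} [AddCommGroup W] [Module ℝ W] [TopologicalSpace W]
    (T : ℂ →L[ℝ] W) (z : ℂ) : T z = z.re • T 1 + z.im • T I := by
  have h : z = z.re • (1:ℂ) + z.im • I := by simp [Complex.real_smul, Complex.re_add_im]
  conv_lhs => rw [h]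
  rw [map_add, map_smul, map_smul]

lemma clm_decomp2 (Q : ℂ →L[ℝ] ℂ →L[ℝ] ℝ) (v w : ℂ) :
    Q v w = v.re * (w.re * Q 1 1 + w.im * Q 1 I) + v.im * (w.re * Q I 1 + w.im * Q I I) := by
  rw [clm_decomp Q v]
  simp only [ContinuousLinearMap.add_apply, ContinuousLinearMap.smul_apply, smul_eq_mul]
  rw [clm_decomp (Q 1) w, clm_decomp (Q I) w]
  simp only [smul_eq_mul]

lemma sqrt_lt_one (μ : ℂ) (h : ‖μ‖ < 1) : ∃ lam : ℂ, lam ^ 2 = μ ∧ ‖lam‖ < 1 := by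
  have h2 : (μ ^ ((2:ℕ):ℂ)⁻¹) ^ (2:ℕ) = μ := Complex.cpow_nat_inv_pow μ two_ne_zero
  refine ⟨μ ^ ((2:ℕ):ℂ)⁻¹, by exact_mod_cast h2, ?_⟩
  have := norm_pow (μ ^ ((2:ℕ):ℂ)⁻¹) 2
  rw [h2] at this
  nlinarith [norm_nonneg (μ ^ ((2:ℕ):ℂ)⁻¹), norm_nonneg μ]

noncomputable def Lmap (μ : ℂ) : ℂ →L[ℝ] ℂ :=
  ContinuousLinearMap.id ℝ ℂ + μ • Complex.conjCLE.toContinuousLinearMap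

lemma Lmap_apply (μ w : ℂ) : Lmap μ w = w + μ * (starRingEnd ℂ) w := by
  simp [Lmap, Complex.conjCLE_apply]

lemma hess_ineq (U : Set ℂ) (hU : IsOpen U)
    (φ : ℂ → ℝ) (hφ : ContDiffOn ℝ (⊤ : ℕ∞) φ U)
    (hsub : ∀ lam : ℂ, ‖lam‖ < 1 →
      ∀ s : ℂ, s + lam ^ 2 * (starRingEnd ℂ) s ∈ U →
        0 ≤ (wdBar (wd (fun w => (φ (w + lam ^ 2 * (starRingEnd ℂ) w) : ℂ))) s).re)
    (t : ℂ) (ht : t ∈ U) (μ : ℂ) (hμ : ‖μ‖ < 1) :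
    0 ≤ (1 + ‖μ‖ ^ 2) *
          (fderiv ℝ (fderiv ℝ φ) t 1 1 + fderiv ℝ (fderiv ℝ φ) t I I)
      + 2 * μ.re * (fderiv ℝ (fderiv ℝ φ) t 1 1 - fderiv ℝ (fderiv ℝ φ) t I I)
      + 2 * (fderiv ℝ (fderiv ℝ φ) t 1 I + fderiv ℝ (fderiv ℝ φ) t I 1) * μ.im := by
  classical
  obtain ⟨lam, hlam2, hlam⟩ := sqrt_lt_one μ hμ
  -- the point s with L s = t
  have habs : ‖μ‖ ^ 2 < 1 := by nlinarith [norm_nonneg μ]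
  have hden : ((1 - ‖μ‖ ^ 2 : ℝ) : ℂ) ≠ 0 := by
    rw [Complex.ofReal_ne_zero]; linarith
  set s : ℂ := (t - μ * (starRingEnd ℂ) t) / ((1 - ‖μ‖ ^ 2 : ℝ) : ℂ) with hs_def
  have hmc : μ * (starRingEnd ℂ) μ = ((‖μ‖ ^ 2 : ℝ) : ℂ) := by
    rw [Complex.mul_conj]; norm_cast; exact (Complex.sq_norm μ).symm
  have hLs : s + μ * (starRingEnd ℂ) s = t := by
    have hconj : (starRingEnd ℂ) s
        = ((starRingEnd ℂ) t - (starRingEnd ℂ) μ * t) / ((1 - ‖μ‖ ^ 2 : ℝ) : ℂ) := by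
      rw [hs_def, map_div₀, map_sub, map_mul, Complex.conj_conj, Complex.conj_ofReal]
    rw [hs_def, hconj, ← mul_div_assoc, ← add_div, div_eq_iff hden]
    push_cast
    push_cast at hmc
    linear_combination (-t) * hmc
  -- setup
  set L : ℂ →L[ℝ] ℂ := Lmap μ with hL_def
  have hLs' : L s = t := by rw [hL_def, Lmap_apply]; exact hLs
  set φc : ℂ → ℂ := fun w => (φ w : ℂ) with hφc_def
  have hφc : ContDiffOn ℝ (⊤ : ℕ∞) φc U := Complex.ofRealCLM.contDiff.comp_contDiffOn hφ
  have hdφc : ∀ w ∈ U, DifferentiableAt ℝ φc w := fun w hw =>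
    (hφc.contDiffAt (hU.mem_nhds hw)).differentiableAt (by simp)
  have hdφ : ∀ w ∈ U, DifferentiableAt ℝ φ w := fun w hw =>
    (hφ.contDiffAt (hU.mem_nhds hw)).differentiableAt (by simp)
  set g : ℂ → ℂ →L[ℝ] ℂ := fderiv ℝ φc with hg_def
  have hsub' := hsub lam hlam s (by rw [hlam2, hLs]; exact ht)
  simp only [hlam2] at hsub'
  set F : ℂ → ℂ := fun w => φc (w + μ * (starRingEnd ℂ) w) with hF_def
  have hFL : ∀ w, F w = φc (L w) := fun w => by rw [hL_def, Lmap_apply]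
  have hVopen : IsOpen (L ⁻¹' U) := hU.preimage L.continuous
  have hsV : s ∈ L ⁻¹' U := by simp only [Set.mem_preimage, hLs']; exact ht
  have hFd : ∀ w ∈ L ⁻¹' U, HasFDerivAt F ((g (L w)).comp L) w := by
    intro w hw
    have h1 := ((hdφc _ hw).hasFDerivAt).comp w L.hasFDerivAt
    exact h1.congr_of_eventuallyEq (Filter.Eventually.of_forall fun x => (hFL x))
  have hwdF : ∀ w ∈ L ⁻¹' U,
      wd F w = (2:ℂ)⁻¹ * (g (L w) (L 1) - I * g (L w) (L I)) := by
    intro w hw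
    rw [wd, (hFd w hw).fderiv]
    simp only [ContinuousLinearMap.comp_apply]
    ring
  set G' : ℂ → ℂ := fun w => (2:ℂ)⁻¹ * (g (L w) (L 1) - I * g (L w) (L I)) with hG'_def
  have hEV : wd F =ᶠ[nhds s] G' := by
    filter_upwards [hVopen.mem_nhds hsV] with w hw
    exact hwdF w hw
  have hct : ContDiffAt ℝ (⊤ : ℕ∞) φc t := hφc.contDiffAt (hU.mem_nhds ht)
  have hgc : ContDiffAt ℝ (⊤ : ℕ∞) g t := hct.fderiv_right (by simp)
  set Qc : ℂ →L[ℝ] ℂ →L[ℝ] ℂ := fderiv ℝ g t with hQc_def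
  have hgd : HasFDerivAt g Qc (L s) := by
    rw [hLs']; exact (hgc.differentiableAt (by simp)).hasFDerivAt
  have h1 : HasFDerivAt (fun w => g (L w)) (Qc.comp L) s := hgd.comp s L.hasFDerivAt
  have h2 : HasFDerivAt (fun w => g (L w) (L 1))
      ((ContinuousLinearMap.apply ℝ ℂ (L 1)).comp (Qc.comp L)) s :=
    (ContinuousLinearMap.apply ℝ ℂ (L 1)).hasFDerivAt.comp s h1
  have h3 : HasFDerivAt (fun w => g (L w) (L I))
      ((ContinuousLinearMap.apply ℝ ℂ (L I)).comp (Qc.comp L)) s :=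
    (ContinuousLinearMap.apply ℝ ℂ (L I)).hasFDerivAt.comp s h1
  have h4 : HasFDerivAt G'
      ((2:ℂ)⁻¹ • (((ContinuousLinearMap.apply ℝ ℂ (L 1)).comp (Qc.comp L))
        - I • ((ContinuousLinearMap.apply ℝ ℂ (L I)).comp (Qc.comp L)))) s :=
    (h2.sub (h3.const_mul I)).const_mul ((2:ℂ)⁻¹)
  have hval : ∀ v : ℂ, fderiv ℝ (wd F) s v
      = (2:ℂ)⁻¹ * (Qc (L v) (L 1) - I * (Qc (L v) (L I))) := by
    intro v
    rw [hEV.fderiv_eq, h4.fderiv]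
    simp [ContinuousLinearMap.comp_apply, ContinuousLinearMap.smul_apply,
      ContinuousLinearMap.sub_apply, ContinuousLinearMap.apply_apply, smul_eq_mul]
  -- relate Qc to real second derivative
  set gr : ℂ → ℂ →L[ℝ] ℝ := fderiv ℝ φ with hgr_def
  set M : (ℂ →L[ℝ] ℝ) →L[ℝ] (ℂ →L[ℝ] ℂ) :=
    (ContinuousLinearMap.compL ℝ ℂ ℝ ℂ) Complex.ofRealCLM with hM_def
  have hgg : ∀ w ∈ U, g w = M (gr w) := by
    intro w hw
    have h5 : HasFDerivAt φc (Complex.ofRealCLM.comp (gr w)) w := by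
      have h6 := Complex.ofRealCLM.hasFDerivAt.comp w (hdφ w hw).hasFDerivAt
      exact h6.congr_of_eventuallyEq (Filter.Eventually.of_forall fun x => rfl)
    rw [hg_def, h5.fderiv]
    rfl
  have hgr_d : DifferentiableAt ℝ gr t :=
    ((hφ.contDiffAt (hU.mem_nhds ht)).fderiv_right (m := (⊤ : ℕ∞)) (by simp)).differentiableAt (by simp)
  set Qr : ℂ →L[ℝ] ℂ →L[ℝ] ℝ := fderiv ℝ gr t with hQr_def
  have hQcM : Qc = M.comp Qr := by
    have hev : g =ᶠ[nhds t] fun w => M (gr w) := by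
      filter_upwards [hU.mem_nhds ht] with w hw using hgg w hw
    rw [hQc_def, hev.fderiv_eq]
    exact (M.hasFDerivAt.comp t hgr_d.hasFDerivAt).fderiv
  have hQcv : ∀ v w : ℂ, Qc v w = ((Qr v w : ℝ) : ℂ) := by
    intro v w
    rw [hQcM]
    rfl
  -- compute the real part
  have hre : (wdBar (wd F) s).re = (Qr (L 1) (L 1) + Qr (L I) (L I)) / 4 := by
    rw [wdBar, hval 1, hval I, hQcv, hQcv, hQcv, hQcv]
    simp [Complex.div_re, Complex.add_re, Complex.add_im, Complex.mul_re, Complex.mul_im,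
      Complex.normSq_apply]
    ring
  -- expansion of Qr on real coordinates
  have hexp : ∀ v w : ℂ, Qr v w
      = v.re * (w.re * Qr 1 1 + w.im * Qr 1 I) + v.im * (w.re * Qr I 1 + w.im * Qr I I) := by
    intro v w
    rw [clm_decomp Qr v]
    simp only [ContinuousLinearMap.add_apply, ContinuousLinearMap.smul_apply, smul_eq_mul]
    rw [clm_decomp (Qr 1) w, clm_decomp (Qr I) w]
    simp only [smul_eq_mul]
  have hL1 : L 1 = 1 + μ := by rw [hL_def, Lmap_apply]; simp
  have hLI : L I = I - μ * I := by
    rw [hL_def, Lmap_apply]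
    simp [Complex.conj_I]
    ring
  have hgoal : (1 + ‖μ‖ ^ 2) * (Qr 1 1 + Qr I I)
      + 2 * μ.re * (Qr 1 1 - Qr I I) + 2 * (Qr 1 I + Qr I 1) * μ.im
      = Qr (L 1) (L 1) + Qr (L I) (L I) := by
    rw [hexp (L 1) (L 1), hexp (L I) (L I), hL1, hLI, Complex.sq_norm, Complex.normSq_apply]
    simp [Complex.add_re, Complex.add_im, Complex.sub_re, Complex.sub_im, Complex.mul_re,
      Complex.mul_im, Complex.I_re, Complex.I_im, Complex.one_re, Complex.one_im]
    ring
  rw [hre] at hsub'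
  rw [hgoal]
  linarith

lemma hess_nonneg (Q : ℂ →L[ℝ] ℂ →L[ℝ] ℝ)
    (hkey : ∀ μ : ℂ, ‖μ‖ < 1 →
      0 ≤ (1 + ‖μ‖ ^ 2) * (Q 1 1 + Q I I)
        + 2 * μ.re * (Q 1 1 - Q I I) + 2 * (Q 1 I + Q I 1) * μ.im)
    (v : ℂ) : 0 ≤ Q v v := by
  rcases eq_or_ne v 0 with rfl | hv0
  · simp
  · have hnorm : ‖v‖ ≠ 0 := norm_ne_zero_iff.mpr hv0
    set u : ℂ := (‖v‖ : ℝ)⁻¹ • v with hu_def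
    have hnu : ‖u‖ = 1 := by
      rw [hu_def, norm_smul]
      simp only [norm_inv, norm_norm]
      exact inv_mul_cancel₀ hnorm
    have hxy : u.re ^ 2 + u.im ^ 2 = 1 := by
      have := Complex.sq_norm u
      rw [hnu, Complex.normSq_apply] at this
      nlinarith
    set x := u.re
    set y := u.im
    set a := Q 1 1
    set b := Q 1 I
    set b' := Q I 1
    set d := Q I I
    set h : ℝ → ℝ := fun r =>
      (1 + r ^ 2) * (a + d) + 2 * (r * (x ^ 2 - y ^ 2)) * (a - d)
        + 2 * (b + b') * (r * (2 * x * y)) with hh_def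
    have hpos : ∀ r : ℝ, 0 ≤ r → r < 1 → 0 ≤ h r := by
      intro r hr0 hr1
      have habs : ‖(r : ℂ) * u ^ 2‖ < 1 := by
        rw [norm_mul, norm_pow, hnu, Complex.norm_of_nonneg hr0]
        simpa using hr1
      have := hkey ((r : ℂ) * u ^ 2) habs
      have hre : ((r : ℂ) * u ^ 2).re = r * (x ^ 2 - y ^ 2) := by
        rw [pow_two, Complex.mul_re, Complex.mul_re, Complex.mul_im,
          Complex.ofReal_re, Complex.ofReal_im]
        ring
      have him : ((r : ℂ) * u ^ 2).im = r * (2 * x * y) := by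
        rw [pow_two, Complex.mul_im, Complex.mul_re, Complex.mul_im,
          Complex.ofReal_re, Complex.ofReal_im]
        ring
      have habs2 : ‖(r : ℂ) * u ^ 2‖ ^ 2 = r ^ 2 := by
        rw [norm_mul, norm_pow, hnu, Complex.norm_of_nonneg hr0]
        ring
      rw [hre, him, habs2] at this
      simpa only [hh_def] using this
    have hcont : Continuous h := by fun_prop
    have hlim : Filter.Tendsto h (nhdsWithin 1 (Set.Iio 1)) (nhds (h 1)) :=
      (hcont.tendsto 1).mono_left nhdsWithin_le_nhds
    have hev : ∀ᶠ r in nhdsWithin (1:ℝ) (Set.Iio 1), 0 ≤ h r := by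
      filter_upwards [Ioo_mem_nhdsLT_of_mem (show (1:ℝ) ∈ Set.Ioc 0 1 by norm_num)]
        with r hr
      exact hpos r hr.1.le hr.2
    have h1 : 0 ≤ h 1 := ge_of_tendsto hlim hev
    have hQuu : 0 ≤ Q u u := by
      rw [clm_decomp2 Q u u]
      have h1' : 0 ≤ (1 + 1 ^ 2) * (a + d) + 2 * (1 * (x ^ 2 - y ^ 2)) * (a - d)
          + 2 * (b + b') * (1 * (2 * x * y)) := h1
      have key : (1 + 1 ^ 2) * (a + d) + 2 * (1 * (x ^ 2 - y ^ 2)) * (a - d)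
          + 2 * (b + b') * (1 * (2 * x * y))
          = 4 * (x * (x * a + y * b) + y * (x * b' + y * d))
            + (2 * (a + d)) * (1 - (x ^ 2 + y ^ 2)) := by ring
      rw [hxy] at key
      have key2 : x * (x * a + y * b) + y * (x * b' + y * d)
          = u.re * (u.re * Q 1 1 + u.im * Q 1 I) + u.im * (u.re * Q I 1 + u.im * Q I I) := rfl
      rw [← key2]
      linarith [h1', key.le, key.ge]
    have hvv : Q v v = ‖v‖ ^ 2 * Q u u := by
      have hv : v = (‖v‖ : ℝ) • u := (smul_inv_smul₀ hnorm v).symm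
      conv_lhs => rw [hv]
      simp only [map_smul, ContinuousLinearMap.smul_apply, smul_eq_mul]
      ring
    rw [hvv]
    positivity

lemma convex_of_hess (U : Set ℂ) (hU : IsOpen U) (hUc : Convex ℝ U)
    (φ : ℂ → ℝ) (hφ : ContDiffOn ℝ (⊤ : ℕ∞) φ U)
    (hkey : ∀ t ∈ U, ∀ v : ℂ, 0 ≤ fderiv ℝ (fderiv ℝ φ) t v v) :
    ConvexOn ℝ U φ := by
  have hdφ : ∀ w ∈ U, DifferentiableAt ℝ φ w := fun w hw =>
    (hφ.contDiffAt (hU.mem_nhds hw)).differentiableAt (by simp)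
  have hdg : ∀ w ∈ U, DifferentiableAt ℝ (fderiv ℝ φ) w := fun w hw =>
    (((hφ.contDiffAt (hU.mem_nhds hw)).fderiv_right (m := (⊤ : ℕ∞)) (by simp)).differentiableAt (by simp))
  refine ⟨hUc, ?_⟩
  intro x hx y hy aw bw ha hb hab
  set v : ℂ := y - x with hv_def
  set c : ℝ → ℂ := fun r => x + r • v with hc_def
  have hcont_c : Continuous c := by fun_prop
  have hseg : ∀ r ∈ Set.Icc (0:ℝ) 1, c r ∈ U := by
    intro r hr
    have h2 := hUc hx hy (by linarith [hr.2] : (0:ℝ) ≤ 1 - r) hr.1 (by ring)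
    have h3 : (1 - r) • x + r • y = c r := by
      simp only [hc_def, hv_def, smul_sub, sub_smul, one_smul]
      ring
    rwa [h3] at h2
  set W : Set ℝ := c ⁻¹' U with hW_def
  have hWopen : IsOpen W := hU.preimage hcont_c
  have hWseg : Set.Icc (0:ℝ) 1 ⊆ W := fun r hr => hseg r hr
  have hc' : ∀ r : ℝ, HasDerivAt c v r := by
    intro r
    have := ((hasDerivAt_id r).smul_const v).const_add x
    simpa [hc_def] using this
  set f : ℝ → ℝ := fun r => φ (c r) with hf_def
  have hf1 : ∀ r ∈ W, HasDerivAt f (fderiv ℝ φ (c r) v) r := by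
    intro r hr
    exact ((hdφ _ hr).hasFDerivAt.comp_hasDerivAt r (hc' r))
  have hf2 : ∀ r ∈ W, HasDerivAt (fun r => fderiv ℝ φ (c r) v)
      (fderiv ℝ (fderiv ℝ φ) (c r) v v) r := by
    intro r hr
    have h1 : HasDerivAt (fun r => fderiv ℝ φ (c r)) (fderiv ℝ (fderiv ℝ φ) (c r) v) r :=
      (hdg _ hr).hasFDerivAt.comp_hasDerivAt r (hc' r)
    have h2 := (ContinuousLinearMap.apply ℝ ℝ v).hasFDerivAt.comp_hasDerivAt r h1
    exact h2
  have hderiv_f : ∀ r ∈ W, deriv f r = fderiv ℝ φ (c r) v := fun r hr => (hf1 r hr).deriv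
  have hconvf : ConvexOn ℝ (Set.Icc (0:ℝ) 1) f := by
    apply convexOn_of_deriv2_nonneg (convex_Icc 0 1)
    · intro r hr
      exact (hf1 r (hWseg hr)).continuousAt.continuousWithinAt
    · intro r hr
      rw [interior_Icc] at hr
      exact ((hf1 r (hWseg (Set.mem_Icc_of_Ioo hr))).differentiableAt).differentiableWithinAt
    · intro r hr
      rw [interior_Icc] at hr
      have hrW : r ∈ W := hWseg (Set.mem_Icc_of_Ioo hr)
      have hEq : deriv f =ᶠ[nhds r] fun r => fderiv ℝ φ (c r) v := by
        filter_upwards [hWopen.mem_nhds hrW] with w hw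
        exact hderiv_f w hw
      have : DifferentiableAt ℝ (fun r => fderiv ℝ φ (c r) v) r := (hf2 r hrW).differentiableAt
      exact (hEq.differentiableAt_iff.mpr this).differentiableWithinAt
    · intro r hr
      rw [interior_Icc] at hr
      have hrW : r ∈ W := hWseg (Set.mem_Icc_of_Ioo hr)
      have hEq : deriv f =ᶠ[nhds r] fun r => fderiv ℝ φ (c r) v := by
        filter_upwards [hWopen.mem_nhds hrW] with w hw
        exact hderiv_f w hw
      have h2 : deriv (deriv f) r = fderiv ℝ (fderiv ℝ φ) (c r) v v := by
        rw [hEq.deriv_eq]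
        exact (hf2 r hrW).deriv
      have h3 : deriv^[2] f r = deriv (deriv f) r := by
        simp [Function.iterate_succ, Function.iterate_zero]
      rw [h3, h2]
      exact hkey (c r) (hseg r (Set.mem_Icc_of_Ioo hr)) v
  -- conclude
  have h0 : (0:ℝ) ∈ Set.Icc (0:ℝ) 1 := by norm_num
  have h1 : (1:ℝ) ∈ Set.Icc (0:ℝ) 1 := by norm_num
  have := hconvf.2 h0 h1 ha hb hab
  have hc0 : c (aw • 0 + bw • 1) = aw • x + bw • y := by
    simp only [hc_def, hv_def, smul_eq_mul, mul_zero, mul_one, zero_add]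
    have : aw = 1 - bw := by linarith
    rw [this]
    ring_nf
    simp [Complex.real_smul]
    ring
  have hcf0 : f 0 = φ x := by simp [hf_def, hc_def]
  have hcf1 : f 1 = φ y := by simp [hf_def, hc_def, hv_def]
  rw [hcf0, hcf1] at this
  calc φ (aw • x + bw • y) = f (aw • 0 + bw • 1) := by
        show φ (aw • x + bw • y) = φ (c (aw • 0 + bw • 1))
        rw [hc0]
    _ ≤ aw * φ x + bw * φ y := by simpa using this

/-- If `φ` is smooth on an open convex `U ⊆ ℂ` and for every `|λ| < 1` the function
`s ↦ φ(s + λ² s̄)` is subharmonic (nonnegative Laplacian, i.e. `∂²/∂s∂s̄ ≥ 0`) on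
`V_λ = {s : s + λ² s̄ ∈ U}`, then `φ` is convex on `U`. -/
theorem convex_of_pullbacks_subharmonic (U : Set ℂ) (hU : IsOpen U) (hUc : Convex ℝ U)
    (φ : ℂ → ℝ) (hφ : ContDiffOn ℝ (⊤ : ℕ∞) φ U)
    (hsub : ∀ lam : ℂ, ‖lam‖ < 1 →
      ∀ s : ℂ, s + lam ^ 2 * (starRingEnd ℂ) s ∈ U →
        0 ≤ (wdBar (wd (fun w => (φ (w + lam ^ 2 * (starRingEnd ℂ) w) : ℂ))) s).re) :
    ConvexOn ℝ U φ := by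
  apply convex_of_hess U hU hUc φ hφ
  intro t ht v
  exact hess_nonneg (fderiv ℝ (fderiv ℝ φ) t)
    (fun μ hμ => hess_ineq U hU φ hφ hsub t ht μ hμ) v
end

section
/- Assume the fiberwise convexity theorem: for any bounded convex domain Ω̃ ⊆ ℂⁿ⁺¹ and convex function φ̃ on Ω̃, the map t ↦ log K_{Ω̃_t, φ̃_t}(z) is convex on {t ∈ ℂ : (z,t) ∈ Ω̃}. Then: for any bounded convex domain Ω ⊆ ℂⁿ and convex function φ : Ω → ℝ, the function z ↦ log K_{Ω,φ}(z) is convex on Ω. -/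
open Complex MeasureTheory

/-- The weighted Bergman kernel of `D ⊆ ℂⁿ` with weight `e^{−ψ}`. -/
noncomputable def bergmanKernel (n : ℕ) (D : Set (Fin n → ℂ)) (ψ : (Fin n → ℂ) → ℝ)
    (z : Fin n → ℂ) : ℝ :=
  sSup {y : ℝ | ∃ f : (Fin n → ℂ) → ℂ, DifferentiableOn ℂ f D ∧
    (∫⁻ w in D, ENNReal.ofReal (‖f w‖ ^ 2 * Real.exp (-ψ w))) ≤ 1 ∧
    y = ‖f z‖ ^ 2}

lemma bergman_translate (n : ℕ) (Ω : Set (Fin n → ℂ)) (ψ : (Fin n → ℂ) → ℝ)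
    (c z : Fin n → ℂ) :
    bergmanKernel n ((fun w => w + c) ⁻¹' Ω) (fun w => ψ (w + c)) z
      = bergmanKernel n Ω ψ (z + c) := by
  unfold bergmanKernel
  congr 1
  ext y
  constructor
  · rintro ⟨f, hf, hint, rfl⟩
    refine ⟨fun w => f (w - c), ?_, ?_, ?_⟩
    · exact hf.comp ((differentiable_id.sub_const c).differentiableOn)
        (fun w hw => by simp [Set.mem_preimage, sub_add_cancel, hw])
    · have := (measurePreserving_add_right volume c).setLIntegral_comp_preimage_emb
        (MeasurableEquiv.addRight c).measurableEmbedding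
        (fun w => ENNReal.ofReal (‖f (w - c)‖ ^ 2 * Real.exp (-ψ w))) Ω
      calc ∫⁻ w in Ω, ENNReal.ofReal (‖f (w - c)‖ ^ 2 * Real.exp (-ψ w))
          = ∫⁻ w in (fun w => w + c) ⁻¹' Ω,
              ENNReal.ofReal (‖f w‖ ^ 2 * Real.exp (-ψ (w + c))) := by
            rw [← this]; simp
        _ ≤ 1 := hint
    · simp [add_sub_cancel_right]
  · rintro ⟨f, hf, hint, rfl⟩
    refine ⟨fun w => f (w + c), ?_, ?_, rfl⟩
    · exact hf.comp ((differentiable_id.add_const c).differentiableOn)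
        (fun w hw => hw)
    · have := (measurePreserving_add_right volume c).setLIntegral_comp_preimage_emb
        (MeasurableEquiv.addRight c).measurableEmbedding
        (fun w => ENNReal.ofReal (‖f w‖ ^ 2 * Real.exp (-ψ w))) Ω
      calc ∫⁻ w in (fun w => w + c) ⁻¹' Ω,
              ENNReal.ofReal (‖f (w + c)‖ ^ 2 * Real.exp (-ψ (w + c)))
          = ∫⁻ w in Ω, ENNReal.ofReal (‖f w‖ ^ 2 * Real.exp (-ψ w)) := this
        _ ≤ 1 := hint

/-- Assuming the fiberwise convexity theorem (for any bounded convex domain `Ω̃ ⊆ ℂⁿ⁺¹` and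
convex `φ̃` on `Ω̃`, the map `t ↦ log K_{Ω̃_t, φ̃_t}(z)` is convex on `{t : (z,t) ∈ Ω̃}`),
for any bounded convex domain `Ω ⊆ ℂⁿ` and convex `φ : Ω → ℝ`, the function
`z ↦ log K_{Ω,φ}(z)` is convex on `Ω`. -/
theorem log_bergman_convex (n : ℕ)
    (hFib : ∀ (Ω' : Set ((Fin n → ℂ) × ℂ)), IsOpen Ω' → Ω'.Nonempty →
      Bornology.IsBounded Ω' → Convex ℝ Ω' →
      ∀ φ' : ((Fin n → ℂ) × ℂ) → ℝ, ConvexOn ℝ Ω' φ' →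
      ∀ z : Fin n → ℂ,
        ConvexOn ℝ {t : ℂ | (z, t) ∈ Ω'}
          (fun t => Real.log
            (bergmanKernel n {w | (w, t) ∈ Ω'} (fun w => φ' (w, t)) z)))
    (Ω : Set (Fin n → ℂ)) (hΩo : IsOpen Ω) (hΩne : Ω.Nonempty)
    (hΩb : Bornology.IsBounded Ω) (hΩc : Convex ℝ Ω)
    (φ : (Fin n → ℂ) → ℝ) (hφ : ConvexOn ℝ Ω φ) :
    ConvexOn ℝ Ω (fun z => Real.log (bergmanKernel n Ω φ z)) := by
  refine ⟨hΩc, fun x hx y hy a b ha hb hab => ?_⟩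
  set c : ℂ → (Fin n → ℂ) := fun t => x + t.re • (y - x) with hc
  set Ω' : Set ((Fin n → ℂ) × ℂ) :=
    {p | p.1 + c p.2 ∈ Ω ∧ p.2 ∈ Metric.ball (0 : ℂ) 2} with hΩ'
  -- affinity of p ↦ p.1 + c p.2
  have haff : ∀ (p q : (Fin n → ℂ) × ℂ) (a' b' : ℝ), a' + b' = 1 →
      (a' • p + b' • q).1 + c (a' • p + b' • q).2
        = a' • (p.1 + c p.2) + b' • (q.1 + c q.2) := by
    intro p q a' b' hab'
    have hb'' : b' = 1 - a' := by linarith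
    subst hb''
    simp only [hc, Prod.fst_add, Prod.snd_add, Prod.smul_fst, Prod.smul_snd,
      Complex.add_re, Complex.smul_re, smul_eq_mul]
    module
  have hopen : IsOpen Ω' := by
    have hcont : Continuous fun p : (Fin n → ℂ) × ℂ => p.1 + c p.2 := by
      simp only [hc]
      exact continuous_fst.add (continuous_const.add
        ((Complex.continuous_re.comp continuous_snd).smul continuous_const))
    exact (hΩo.preimage hcont).inter (Metric.isOpen_ball.preimage continuous_snd)
  have hne : Ω'.Nonempty := by
    refine ⟨(0, 0), ?_, by simp⟩
    simpa [hc] using hx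
  have hbdd : Bornology.IsBounded Ω' := by
    rw [isBounded_iff_forall_norm_le] at hΩb ⊢
    obtain ⟨r, hr⟩ := hΩb
    refine ⟨max (r + (‖x‖ + 2 * ‖y - x‖)) 2, fun p hp => ?_⟩
    rw [Prod.norm_def]
    refine max_le_max ?_ ?_
    · have h1 : ‖p.1 + c p.2‖ ≤ r := hr _ hp.1
      have h2 : ‖c p.2‖ ≤ ‖x‖ + 2 * ‖y - x‖ := by
        calc ‖c p.2‖ ≤ ‖x‖ + ‖p.2.re • (y - x)‖ := norm_add_le _ _
          _ = ‖x‖ + |p.2.re| * ‖y - x‖ := by rw [norm_smul, Real.norm_eq_abs]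
          _ ≤ ‖x‖ + 2 * ‖y - x‖ := by
              have : |p.2.re| ≤ ‖p.2‖ := Complex.abs_re_le_norm p.2
              have h3 : ‖p.2‖ ≤ 2 := by
                have := hp.2
                simp only [Metric.mem_ball, dist_zero_right] at this
                linarith
              nlinarith [norm_nonneg (y - x)]
      calc ‖p.1‖ = ‖(p.1 + c p.2) - c p.2‖ := by rw [add_sub_cancel_right]
        _ ≤ ‖p.1 + c p.2‖ + ‖c p.2‖ := norm_sub_le _ _
        _ ≤ r + (‖x‖ + 2 * ‖y - x‖) := add_le_add h1 h2
    · have := hp.2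
      simp only [Metric.mem_ball, dist_zero_right] at this
      linarith
  have hconv : Convex ℝ Ω' := by
    intro p hp q hq a' b' ha' hb' hab'
    constructor
    · rw [haff p q a' b' hab']
      exact hΩc hp.1 hq.1 ha' hb' hab'
    · exact (convex_ball (0 : ℂ) 2) hp.2 hq.2 ha' hb' hab'
  have hφ' : ConvexOn ℝ Ω' (fun p : (Fin n → ℂ) × ℂ => φ (p.1 + c p.2)) := by
    refine ⟨hconv, fun p hp q hq a' b' ha' hb' hab' => ?_⟩
    dsimp only
    rw [haff p q a' b' hab']
    exact hφ.2 hp.1 hq.1 ha' hb' hab'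
  have H := hFib Ω' hopen hne hbdd hconv _ hφ' 0
  -- values of F on the ball
  have Fval : ∀ t : ℂ, t ∈ Metric.ball (0 : ℂ) 2 →
      bergmanKernel n {w | (w, t) ∈ Ω'}
        (fun w => φ ((w, t).1 + c (w, t).2)) 0 = bergmanKernel n Ω φ (c t) := by
    intro t ht
    have hset : {w | (w, t) ∈ Ω'} = (fun w => w + c t) ⁻¹' Ω := by
      ext w; exact and_iff_left ht
    rw [hset]
    simpa using bergman_translate n Ω φ (c t) 0
  have h0 : (0 : ℂ) ∈ {t : ℂ | ((0 : Fin n → ℂ), t) ∈ Ω'} := by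
    constructor
    · simpa [hc] using hx
    · simp
  have h1 : (1 : ℂ) ∈ {t : ℂ | ((0 : Fin n → ℂ), t) ∈ Ω'} := by
    constructor
    · simpa [hc] using hy
    · simp only [Metric.mem_ball, dist_zero_right, norm_one]; norm_num
  have key := H.2 h0 h1 ha hb hab
  have hcomb : a • (0 : ℂ) + b • (1 : ℂ) = (b : ℂ) := by
    simp [Complex.real_smul]
  rw [hcomb] at key
  dsimp only at key ⊢
  have hb2 : (b : ℂ) ∈ Metric.ball (0 : ℂ) 2 := by
    simp only [Metric.mem_ball, dist_zero_right, Complex.norm_real, Real.norm_eq_abs]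
    rw [_root_.abs_of_nonneg hb]; linarith
  rw [Fval 0 (by simp), Fval 1 (by simp only [Metric.mem_ball, dist_zero_right, norm_one]; norm_num), Fval _ hb2] at key
  have hc0 : c 0 = x := by simp [hc]
  have hc1 : c 1 = y := by simp [hc]
  have hcb : c (b : ℂ) = a • x + b • y := by
    simp only [hc, Complex.ofReal_re]
    rw [show a = 1 - b by linarith]
    module
  rw [hc0, hc1, hcb] at key
  exact key
end
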